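/- (Necessary optimality condition for open-loop controls.) Let ū and u be open-loop controls, μ̄ and μ solutions of the FPK equation for ū and for u respectively with the same initial law ϑ, and p̄ a bounded C^{1,2} function (with bounded ∂_t p̄, ∇_x p̄, ∇²_x p̄) satisfying ∂_s p̄_s(x) + ∇p̄_s(x)·f(s,x,ū(s)) + Tr(∇²p̄_s(x) D(s,x)) = 0 and p̄_T = ℓ. Assume that for almost every t ∈ I, ∫ ∇p̄_t(x)·f(t,x,u(t)) dμ_t(x) = min over υ ∈ U of ∫ ∇p̄_t(x)·f(t,x,υ) dμ_t(x), and that ū is optimal in the sense that ∫ ℓ dμ̄_T ≤ ∫ ℓ dμ_T. Then for almost every t ∈ I, also ∫ ∇p̄_t(x)·f(t,x,ū(t)) dμ_t(x) = min over υ ∈ U of ∫ ∇p̄_t(x)·f(t,x,υ) dμ_t(x). -/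

import Mathlib

open MeasureTheory intervalIntegral

noncomputable section

/-- Euclidean space ℝⁿ. -/
abbrev Eu (n : ℕ) : Type := EuclideanSpace ℝ (Fin n)

/-- Laplacian of `φ` at `x`: the trace of the Hessian. -/
def lapl {n : ℕ} (φ : Eu n → ℝ) (x : Eu n) : ℝ :=
  ∑ i : Fin n, fderiv ℝ (fun y => fderiv ℝ φ y (EuclideanSpace.single i 1)) x
    (EuclideanSpace.single i 1)

/-- `η` is of class C^{1,2} (C¹ in time, C² in space) and bounded together with
`∂ₜη`, `∇ₓη` and `∇²ₓη`. -/
structure C12Bdd {n : ℕ} (η : ℝ → Eu n → ℝ) : Prop where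
  smooth_t : ∀ x, ContDiff ℝ 1 fun t => η t x
  smooth_x : ∀ t, ContDiff ℝ 2 (η t)
  bdd : ∃ C, ∀ t x, |η t x| ≤ C
  bdd_dt : ∃ C, ∀ t x, |deriv (fun s => η s x) t| ≤ C
  bdd_grad : ∃ C, ∀ t x, ‖gradient (η t) x‖ ≤ C
  bdd_hess : ∃ C, ∀ t x, ‖fderiv ℝ (fderiv ℝ (η t)) x‖ ≤ C

/-- `Tr(∇²φ(x) · D)`: the trace of the product of the Hessian of `φ` at `x` with the
matrix `D`. -/
def hessTr {n : ℕ} (φ : Eu n → ℝ) (x : Eu n) (D : Matrix (Fin n) (Fin n) ℝ) : ℝ :=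
  ∑ i : Fin n, ∑ j : Fin n,
    fderiv ℝ (fun y => fderiv ℝ φ y (EuclideanSpace.single j 1)) x
      (EuclideanSpace.single i 1) * D j i

/-- `μ : [0,T] → P(ℝⁿ)` is a (distributional) solution of the Fokker–Planck–Kolmogorov
equation for the open-loop control `u`, drift `f`, diffusion matrix `D`, with initial
law `ϑ`. -/
def IsFPKol {n m : ℕ} (T : ℝ) (f : ℝ → Eu n → Eu m → Eu n)
    (D : ℝ → Eu n → Matrix (Fin n) (Fin n) ℝ)
    (u : ℝ → Eu m) (ϑ : Measure (Eu n)) (μ : ℝ → Measure (Eu n)) : Prop :=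
  (∀ t, IsProbabilityMeasure (μ t)) ∧
  μ 0 = ϑ ∧
  (∀ φ : Eu n → ℝ, Continuous φ → (∃ C, ∀ x, |φ x| ≤ C) →
    Measurable fun t => ∫ x, φ x ∂μ t) ∧
  (∀ η : ℝ → Eu n → ℝ, C12Bdd η → ∀ t ∈ Set.Icc (0:ℝ) T,
    (∫ x, η t x ∂μ t) - (∫ x, η 0 x ∂μ 0) =
      ∫ s in (0:ℝ)..t, ∫ x, (deriv (fun r => η r x) s
        + (inner ℝ (gradient (η s) x) (f s x (u s)) : ℝ) + hessTr (η s) x (D s x)) ∂μ s)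

/-!
Test the FPK equations of `μ` and `μb` against the adjoint state `pb`. Since `pb` solves the
backward equation driven by `ub`, the integrand vanishes for `μb` and reduces to `a t - b t`
for `μ`, where `a t = ∫ ∇pb_t · f(t, ·, u t) dμ_t` and `b t = ∫ ∇pb_t · f(t, ·, ub t) dμ_t`.
As `pb_T = ℓ` and the initial laws agree, optimality of `ub` gives `∫₀ᵀ (a - b) ≥ 0`, while
the minimality of `u t` gives `a ≤ b` a.e.; hence `a = b` a.e., so `ub t` attains the same
minimum.
-/

theorem MeasureTheory.Measure.measurable_of_measurable_integral {α Ω : Type*}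
    [MeasurableSpace α] [PseudoEMetricSpace Ω] [MeasurableSpace Ω] [BorelSpace Ω]
    {μ : α → Measure Ω} [∀ a, IsProbabilityMeasure (μ a)]
    (h : ∀ φ : Ω → ℝ, Continuous φ → (∃ C, ∀ x, |φ x| ≤ C) →
      Measurable fun a => ∫ x, φ x ∂μ a) :
    Measurable μ := by
  refine .measure_of_isPiSystem_of_isProbabilityMeasure
    (BorelSpace.measurable_eq.trans borel_eq_generateFrom_isClosed) isPiSystem_isClosed
    fun F hF => ?_
  have hδ (k : ℕ) : 0 < 1 / ((k : ℝ) + 1) := Nat.one_div_pos_of_nat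
  have hreal : Measurable fun a => (μ a).real F := by
    refine measurable_of_tendsto_metrizable (fun k => h _ ?_ ⟨1, fun x => ?_⟩)
      (tendsto_pi_nhds.2 fun a => tendsto_integral_thickenedIndicator_of_isClosed (μ a) hF hδ
        tendsto_one_div_add_atTop_nhds_zero_nat)
    · exact NNReal.continuous_coe.comp (thickenedIndicator (hδ k) F).continuous
    · simpa using thickenedIndicator_le_one (hδ k) F x
  simpa using hreal.ennreal_ofReal

theorem MeasureTheory.Measure.stronglyMeasurable_integral_of_measurable {α β E : Type*}
    [MeasurableSpace α] [MeasurableSpace β] [NormedAddCommGroup E] [NormedSpace ℝ E]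
    {μ : α → Measure β} [∀ a, IsProbabilityMeasure (μ a)] (hμ : Measurable μ)
    {g : α → β → E} (hg : StronglyMeasurable (Function.uncurry g)) :
    StronglyMeasurable fun a => ∫ x, g a x ∂μ a :=
  have : ProbabilityTheory.IsMarkovKernel ⟨μ, hμ⟩ := ⟨inferInstance⟩
  hg.integral_kernel_prod_right (κ := ⟨μ, hμ⟩)

theorem measurable_gradient_with_param {α E : Type*} [TopologicalSpace α] [MeasurableSpace α]
    [OpensMeasurableSpace α] [NormedAddCommGroup E] [InnerProductSpace ℝ E] [CompleteSpace E]
    [LocallyCompactSpace E] [MeasurableSpace E] [BorelSpace E]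
    {η : α → E → ℝ} (hη : Continuous (Function.uncurry η)) :
    Measurable fun p : α × E => gradient (η p.1) p.2 :=
  (InnerProductSpace.toDual ℝ E).symm.continuous.measurable.comp
    (measurable_fderiv_with_param ℝ hη)

theorem ae_eq_of_ae_le_of_intervalIntegral_sub_nonneg {a b : ℝ → ℝ} {T : ℝ} (hT : 0 ≤ T)
    (ha : IntegrableOn a (Set.Icc 0 T)) (hb : IntegrableOn b (Set.Icc 0 T))
    (hab : a ≤ᵐ[volume.restrict (Set.Icc 0 T)] b)
    (hint : 0 ≤ ∫ t in (0:ℝ)..T, (a t - b t)) :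
    a =ᵐ[volume.restrict (Set.Icc 0 T)] b := by
  rw [intervalIntegral.integral_of_le hT, ← integral_Icc_eq_integral_Ioc,
    integral_sub ha hb, sub_nonneg] at hint
  exact (integral_eq_iff_of_ae_le ha hb hab).1 (le_antisymm (integral_mono_ae ha hb hab) hint)

theorem C12Bdd.continuous_uncurry {n : ℕ} {η : ℝ → Eu n → ℝ} (hη : C12Bdd η) :
    Continuous (Function.uncurry η) := by
  obtain ⟨C, hC⟩ := hη.bdd_dt
  refine continuous_prod_of_continuous_lipschitzWith _ C.toNNReal
    (fun t => (hη.smooth_x t).continuous) fun x => ?_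
  refine lipschitzWith_of_nnnorm_deriv_le ((hη.smooth_t x).differentiable one_ne_zero)
    fun t => ?_
  rw [← NNReal.coe_le_coe, coe_nnnorm, Real.coe_toNNReal']
  exact (hC t x).trans (le_max_left _ _)

/-- `∫ ∇p_t · f(t, ·, υ) dμ_t`, the function of the control value `υ` minimised in the
Pontryagin condition. -/
def driftPairing {n m : ℕ} (p : ℝ → Eu n → ℝ) (f : ℝ → Eu n → Eu m → Eu n)
    (μ : ℝ → Measure (Eu n)) (t : ℝ) (υ : Eu m) : ℝ :=
  ∫ x, (inner ℝ (gradient (p t) x) (f t x υ) : ℝ) ∂μ t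

section DriftPairing

variable {n m : ℕ} {p : ℝ → Eu n → ℝ} {f : ℝ → Eu n → Eu m → Eu n} {Cg Cf : ℝ}

theorem abs_inner_gradient_le (hCg : ∀ t x, ‖gradient (p t) x‖ ≤ Cg)
    (hCf : ∀ t x υ, ‖f t x υ‖ ≤ Cf) (t : ℝ) (x : Eu n) (υ : Eu m) :
    |(inner ℝ (gradient (p t) x) (f t x υ) : ℝ)| ≤ Cg * Cf :=
  (abs_real_inner_le_norm _ _).trans <|
    mul_le_mul (hCg t x) (hCf t x υ) (norm_nonneg _) ((norm_nonneg _).trans (hCg t x))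

theorem integrable_inner_gradient (hp : C12Bdd p)
    (hf : Measurable fun q : ℝ × Eu n × Eu m => f q.1 q.2.1 q.2.2)
    (hCg : ∀ t x, ‖gradient (p t) x‖ ≤ Cg) (hCf : ∀ t x υ, ‖f t x υ‖ ≤ Cf)
    (ν : Measure (Eu n)) [IsFiniteMeasure ν] (t : ℝ) (υ : Eu m) :
    Integrable (fun x => (inner ℝ (gradient (p t) x) (f t x υ) : ℝ)) ν := by
  have hgrad : Continuous (gradient (p t)) :=
    (InnerProductSpace.toDual ℝ (Eu n)).symm.continuous.comp
      ((hp.smooth_x t).continuous_fderiv (by norm_num))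
  refine .of_bound (hgrad.measurable.inner ?_).aestronglyMeasurable (Cg * Cf)
    (ae_of_all _ fun x => abs_inner_gradient_le hCg hCf t x υ)
  exact hf.comp (measurable_const.prodMk (measurable_id.prodMk measurable_const))

theorem abs_driftPairing_le (hCg : ∀ t x, ‖gradient (p t) x‖ ≤ Cg)
    (hCf : ∀ t x υ, ‖f t x υ‖ ≤ Cf) (μ : ℝ → Measure (Eu n))
    [∀ t, IsProbabilityMeasure (μ t)] (t : ℝ) (υ : Eu m) :
    |driftPairing p f μ t υ| ≤ Cg * Cf := by
  have hbound : ∀ᵐ x ∂μ t, ‖(inner ℝ (gradient (p t) x) (f t x υ) : ℝ)‖ ≤ Cg * Cf :=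
    ae_of_all _ fun x => abs_inner_gradient_le hCg hCf t x υ
  simpa only [driftPairing, probReal_univ, mul_one, Real.norm_eq_abs] using
    norm_integral_le_of_norm_le_const hbound

theorem integrableOn_driftPairing (hp : C12Bdd p)
    (hf : Measurable fun q : ℝ × Eu n × Eu m => f q.1 q.2.1 q.2.2)
    (hCg : ∀ t x, ‖gradient (p t) x‖ ≤ Cg) (hCf : ∀ t x υ, ‖f t x υ‖ ≤ Cf)
    {μ : ℝ → Measure (Eu n)} [∀ t, IsProbabilityMeasure (μ t)] (hμ : Measurable μ)
    {w : ℝ → Eu m} (hw : Measurable w) {s : Set ℝ} (hs : volume s < ⊤) :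
    IntegrableOn (fun t => driftPairing p f μ t (w t)) s := by
  have hjoint : Measurable (Function.uncurry fun t x =>
      (inner ℝ (gradient (p t) x) (f t x (w t)) : ℝ)) :=
    (measurable_gradient_with_param hp.continuous_uncurry).inner
      (hf.comp (measurable_fst.prodMk (measurable_snd.prodMk (hw.comp measurable_fst))))
  refine .of_bound hs ?_ (Cg * Cf) (ae_of_all _ fun t => abs_driftPairing_le hCg hCf μ t (w t))
  exact (Measure.stronglyMeasurable_integral_of_measurable hμ
    hjoint.stronglyMeasurable).aestronglyMeasurable

theorem IsFPKol.integral_sub_integral_eq_integral_driftPairing_sub {T : ℝ}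
    {D : ℝ → Eu n → Matrix (Fin n) (Fin n) ℝ} {u ub : ℝ → Eu m} {ϑ : Measure (Eu n)}
    {μ : ℝ → Measure (Eu n)} (hμ : IsFPKol T f D u ϑ μ) (hp : C12Bdd p)
    (hf : Measurable fun q : ℝ × Eu n × Eu m => f q.1 q.2.1 q.2.2)
    (hCg : ∀ t x, ‖gradient (p t) x‖ ≤ Cg) (hCf : ∀ t x υ, ‖f t x υ‖ ≤ Cf) (hT : 0 ≤ T)
    (hpde : ∀ s ∈ Set.Icc (0:ℝ) T, ∀ x : Eu n,
      deriv (fun r => p r x) s + (inner ℝ (gradient (p s) x) (f s x (ub s)) : ℝ)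
        + hessTr (p s) x (D s x) = 0) :
    ∫ x, p T x ∂μ T - ∫ x, p 0 x ∂ϑ =
      ∫ s in (0:ℝ)..T, (driftPairing p f μ s (u s) - driftPairing p f μ s (ub s)) := by
  obtain ⟨hprob, rfl, -, hweak⟩ := hμ
  rw [hweak p hp T ⟨hT, le_rfl⟩]
  refine intervalIntegral.integral_congr fun s hs => ?_
  rw [Set.uIcc_of_le hT] at hs
  have hintegrand (x : Eu n) :
      deriv (fun r => p r x) s + (inner ℝ (gradient (p s) x) (f s x (u s)) : ℝ)
        + hessTr (p s) x (D s x) = (inner ℝ (gradient (p s) x) (f s x (u s)) : ℝ)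
        - (inner ℝ (gradient (p s) x) (f s x (ub s)) : ℝ) := by
    linarith [hpde s hs x]
  simp only [hintegrand]
  exact integral_sub (integrable_inner_gradient hp hf hCg hCf _ s _)
    (integrable_inner_gradient hp hf hCg hCf _ s _)

end DriftPairing

theorem necessary_optimality_open_loop_general
    {n m : ℕ} (T : ℝ) (hT : 0 < T)
    (U : Set (Eu m))
    (f : ℝ → Eu n → Eu m → Eu n)
    (hfmeas : Measurable fun p : ℝ × Eu n × Eu m => f p.1 p.2.1 p.2.2)
    (hfbdd : ∃ C, ∀ t x υ, ‖f t x υ‖ ≤ C)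
    (D : ℝ → Eu n → Matrix (Fin n) (Fin n) ℝ)
    (ℓ : Eu n → ℝ)
    (ub : ℝ → Eu m) (hubmeas : Measurable ub) (hubU : ∀ t, ub t ∈ U)
    (u : ℝ → Eu m) (humeas : Measurable u)
    (ϑ : Measure (Eu n)) (μb μ : ℝ → Measure (Eu n))
    (hFPKb : IsFPKol T f D ub ϑ μb) (hFPK : IsFPKol T f D u ϑ μ)
    (pb : ℝ → Eu n → ℝ) (hpb : C12Bdd pb)
    (hpde : ∀ s ∈ Set.Icc (0:ℝ) T, ∀ x : Eu n,
      deriv (fun r => pb r x) s + (inner ℝ (gradient (pb s) x) (f s x (ub s)) : ℝ)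
        + hessTr (pb s) x (D s x) = 0)
    (hterm : ∀ x, pb T x = ℓ x)
    (hmin : ∀ᵐ t ∂(volume.restrict (Set.Icc (0:ℝ) T)), ∀ υ ∈ U,
      (∫ x, (inner ℝ (gradient (pb t) x) (f t x (u t)) : ℝ) ∂μ t) ≤
        ∫ x, (inner ℝ (gradient (pb t) x) (f t x υ) : ℝ) ∂μ t)
    (hopt : (∫ x, ℓ x ∂μb T) ≤ ∫ x, ℓ x ∂μ T) :
    ∀ᵐ t ∂(volume.restrict (Set.Icc (0:ℝ) T)), ∀ υ ∈ U,
      (∫ x, (inner ℝ (gradient (pb t) x) (f t x (ub t)) : ℝ) ∂μ t) ≤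
        ∫ x, (inner ℝ (gradient (pb t) x) (f t x υ) : ℝ) ∂μ t := by
  obtain ⟨Cg, hCg⟩ := hpb.bdd_grad
  obtain ⟨Cf, hCf⟩ := hfbdd
  have := hFPK.1
  have hμ : Measurable μ := Measure.measurable_of_measurable_integral hFPK.2.2.1
  have hgap := hFPK.integral_sub_integral_eq_integral_driftPairing_sub hpb hfmeas hCg hCf
    hT.le hpde
  have hgapb := hFPKb.integral_sub_integral_eq_integral_driftPairing_sub hpb hfmeas hCg hCf
    hT.le hpde
  simp only [sub_self, intervalIntegral.integral_zero, hterm] at hgap hgapb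
  have hvol : volume (Set.Icc (0:ℝ) T) < ⊤ := measure_Icc_lt_top
  have hae := ae_eq_of_ae_le_of_intervalIntegral_sub_nonneg hT.le
    (integrableOn_driftPairing hpb hfmeas hCg hCf hμ humeas hvol)
    (integrableOn_driftPairing hpb hfmeas hCg hCf hμ hubmeas hvol)
    (hmin.mono fun t ht => ht (ub t) (hubU t)) (by linarith)
  filter_upwards [hmin, hae] with t ht hte υ hυ
  exact hte.symm.le.trans (ht υ hυ)

theorem necessary_optimality_open_loop
    {n m : ℕ} (hn : 1 ≤ n) (hm : 1 ≤ m) (T : ℝ) (hT : 0 < T)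
    (U : Set (Eu m)) (hUne : U.Nonempty) (hUcp : IsCompact U)
    (f : ℝ → Eu n → Eu m → Eu n)
    (hfmeas : Measurable fun p : ℝ × Eu n × Eu m => f p.1 p.2.1 p.2.2)
    (hfbdd : ∃ C, ∀ t x υ, ‖f t x υ‖ ≤ C)
    (D : ℝ → Eu n → Matrix (Fin n) (Fin n) ℝ)
    (hDcont : Continuous fun p : ℝ × Eu n => D p.1 p.2)
    (hDbdd : ∃ C, ∀ t x i j, |D t x i j| ≤ C)
    (hDpsd : ∀ t x, (D t x).PosSemidef) (hDsymm : ∀ t x, (D t x).IsSymm)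
    (ℓ : Eu n → ℝ) (hℓ : ContDiff ℝ 2 ℓ) (hℓbdd : ∃ C, ∀ x, |ℓ x| ≤ C)
    (ub : ℝ → Eu m) (hubmeas : Measurable ub) (hubU : ∀ t, ub t ∈ U)
    (u : ℝ → Eu m) (humeas : Measurable u) (huU : ∀ t, u t ∈ U)
    (ϑ : Measure (Eu n)) (μb μ : ℝ → Measure (Eu n))
    (hFPKb : IsFPKol T f D ub ϑ μb) (hFPK : IsFPKol T f D u ϑ μ)
    (pb : ℝ → Eu n → ℝ) (hpb : C12Bdd pb)
    (hpde : ∀ s ∈ Set.Icc (0:ℝ) T, ∀ x : Eu n,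
      deriv (fun r => pb r x) s + (inner ℝ (gradient (pb s) x) (f s x (ub s)) : ℝ)
        + hessTr (pb s) x (D s x) = 0)
    (hterm : ∀ x, pb T x = ℓ x)
    (hmin : ∀ᵐ t ∂(volume.restrict (Set.Icc (0:ℝ) T)), ∀ υ ∈ U,
      (∫ x, (inner ℝ (gradient (pb t) x) (f t x (u t)) : ℝ) ∂μ t) ≤
        ∫ x, (inner ℝ (gradient (pb t) x) (f t x υ) : ℝ) ∂μ t)
    (hopt : (∫ x, ℓ x ∂μb T) ≤ ∫ x, ℓ x ∂μ T) :
    ∀ᵐ t ∂(volume.restrict (Set.Icc (0:ℝ) T)), ∀ υ ∈ U,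
      (∫ x, (inner ℝ (gradient (pb t) x) (f t x (ub t)) : ℝ) ∂μ t) ≤
        ∫ x, (inner ℝ (gradient (pb t) x) (f t x υ) : ℝ) ∂μ t :=
  necessary_optimality_open_loop_general T hT U f hfmeas hfbdd D ℓ ub hubmeas hubU u humeas ϑ μb μ
    hFPKb hFPK pb hpb hpde hterm hmin hopt
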